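/- arXiv:1706.02986 — 10 statements merged into one kernel-verified Lean document; each statement's English description precedes it below -/
import Mathlib

section
/- Let a ≥ 8 and C ≥ 1 be reals, and define β(s) = C + (3/2)·ln(1 + ln s) for s ≥ 1. Then the quantity S = sup { s ≥ 1 : a·β(s) ≥ s } satisfies S ≤ a·C + 2·a·ln(1 + ln(a·C)), provided additionally C·(1 + ln(a·C)) ≥ 3 (so that the correction factor (C·(1+ln(aC)))/(C·(1+ln(aC)) − 3/2) is at most 2). -/
/-!
Let `x = 1 + ln(aC)` and `B = aC + 2a·ln x`. The map `s ↦ a·β(s)` is concave, so it lies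
below its tangent at `B`, whose slope `3a / (2B(1 + ln B))`
is at most `1/2` by the hypothesis `C·x ≥ 3`. Hence `a·β(B) ≤ B` forces `s ≤ B` whenever
`s ≤ a·β(s)`. The inequality `a·β(B) ≤ B` amounts to `(1 + ln B)³ ≤ x⁴`; since
`1 + ln B ≤ x + ln(1 + 2 ln x)`, this follows from `ln y ≤ y/e` and the polynomial bound
`(1.3x + 0.4)³ ≤ x⁴` for `x ≥ 3`.
-/

open Real

namespace LogLogInversion

noncomputable def beta (C s : ℝ) : ℝ := C + 3 / 2 * log (1 + log s)

lemma log_le_log_add_div_sub_one {x y : ℝ} (hx : 0 < x) (hy : 0 < y) :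
    log x ≤ log y + x / y - 1 := by
  have h := log_le_sub_one_of_pos (div_pos hx hy)
  rw [log_div hx.ne' hy.ne'] at h
  linarith

lemma log_le_div_exp_one {y : ℝ} (hy : 0 < y) : log y ≤ y / exp 1 := by
  rw [le_div_iff₀' (exp_pos 1)]
  simpa [exp_log hy] using exp_one_mul_le_exp (x := log y)

lemma beta_le_tangent (C : ℝ) {s B : ℝ} (hs : 1 ≤ s) (hB : 1 ≤ B) :
    beta C s ≤ beta C B + 3 / 2 * ((s - B) / (B * (1 + log B))) := by
  have hB0 : 0 < B := by linarith
  have hlogB : 0 < 1 + log B := by linarith [log_nonneg hB]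
  have hlogs : 0 < 1 + log s := by linarith [log_nonneg hs]
  have hss : log s ≤ log B + s / B - 1 := log_le_log_add_div_sub_one (by linarith) hB0
  have hloglog := log_le_log_add_div_sub_one hlogs hlogB
  have hslope : (1 + log s) / (1 + log B) - 1 ≤ (s - B) / (B * (1 + log B)) := by
    rw [div_sub_one hlogB.ne', ← div_div, div_le_div_iff_of_pos_right hlogB,
      le_div_iff₀ hB0]
    nlinarith [div_mul_cancel₀ s hB0.ne']
  unfold beta
  linarith

lemma le_of_le_mul_beta {a C B s : ℝ} (ha : 0 ≤ a) (hB : 1 ≤ B) (hfix : a * beta C B ≤ B)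
    (hslope : 3 * a ≤ B * (1 + log B)) (hs : 1 ≤ s) (hsβ : s ≤ a * beta C s) : s ≤ B := by
  by_contra! hBs
  have hden : 0 < B * (1 + log B) := by
    have := log_nonneg hB
    positivity
  have hhalf : a * (3 / 2 * ((s - B) / (B * (1 + log B)))) ≤ (s - B) / 2 := by
    rw [mul_div_assoc', mul_div_assoc', div_le_div_iff₀ hden two_pos]
    nlinarith [sub_pos.2 hBs]
  nlinarith [mul_le_mul_of_nonneg_left (beta_le_tangent C hs hB) ha]

lemma cube_le_pow_four {x : ℝ} (hx : 3 ≤ x) : (13 / 10 * x + 2 / 5) ^ 3 ≤ x ^ 4 := by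
  nlinarith [mul_nonneg (mul_nonneg (sub_nonneg.2 hx) (sub_nonneg.2 hx)) (sub_nonneg.2 hx),
    sq_nonneg (x - 3), sq_nonneg x]

lemma log_one_add_two_mul_log_le {x : ℝ} (hx : 1 ≤ x) :
    log (1 + 2 * log x) ≤ 3 / 10 * x + 2 / 5 := by
  have he : 27 / 10 ≤ exp 1 := by linarith [exp_one_gt_d9]
  have hL : log x ≤ x / exp 1 := log_le_div_exp_one (by linarith)
  have hL0 := log_nonneg hx
  calc log (1 + 2 * log x) ≤ (1 + 2 * log x) / exp 1 := log_le_div_exp_one (by linarith)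
    _ ≤ (1 + 2 * (x / exp 1)) / exp 1 := by gcongr
    _ ≤ (1 + 2 * (x / (27 / 10))) / (27 / 10) := by gcongr
    _ ≤ 3 / 10 * x + 2 / 5 := by linarith

lemma three_mul_log_one_add_log_le {a y : ℝ} (ha : 0 ≤ a) (hay : a ≤ y) (hy : 8 ≤ y) :
    3 * log (1 + log (y + 2 * a * log (1 + log y))) ≤ 4 * log (1 + log y) := by
  set x := 1 + log y
  have hx : 3 ≤ x := by
    have : 2 ≤ log y := by
      rw [le_log_iff_exp_le (by linarith), show (2 : ℝ) = 1 + 1 by norm_num, exp_add]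
      nlinarith [exp_one_lt_d9, exp_pos 1]
    linarith
  have hL := log_nonneg (show 1 ≤ x by linarith)
  have hB : y + 2 * a * log x ≤ y * (1 + 2 * log x) := by nlinarith
  have hlogB : log (y + 2 * a * log x) ≤ log y + log (1 + 2 * log x) := by
    rw [← log_mul (by linarith) (by linarith)]
    exact log_le_log (by positivity) hB
  have hbase : 0 < 1 + log (y + 2 * a * log x) := by
    have := log_nonneg (show 1 ≤ y + 2 * a * log x by nlinarith)
    linarith
  have hcube : (1 + log (y + 2 * a * log x)) ^ 3 ≤ x ^ 4 :=
    calc (1 + log (y + 2 * a * log x)) ^ 3 ≤ (13 / 10 * x + 2 / 5) ^ 3 := by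
          refine pow_le_pow_left₀ hbase.le ?_ 3
          linarith [log_one_add_two_mul_log_le (show 1 ≤ x by linarith)]
      _ ≤ x ^ 4 := cube_le_pow_four hx
  have := log_le_log (by positivity) hcube
  rwa [log_pow, log_pow, Nat.cast_ofNat, Nat.cast_ofNat] at this

end LogLogInversion

open LogLogInversion

/-- Log-log bound inversion (upper bound): for `a ≥ 8`, `C ≥ 1` with
`C·(1 + ln(aC)) ≥ 3`, the supremum `S = sup {s ≥ 1 : a·β(s) ≥ s}` where
`β(s) = C + (3/2)·ln(1 + ln s)` satisfies `S ≤ aC + 2a·ln(1 + ln(aC))`. -/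
theorem stmt1 (a C : ℝ) (ha : 8 ≤ a) (hC : 1 ≤ C)
    (hcorr : 3 ≤ C * (1 + Real.log (a * C))) :
    sSup {s : ℝ | 1 ≤ s ∧ s ≤ a * (C + 3 / 2 * Real.log (1 + Real.log s))}
      ≤ a * C + 2 * a * Real.log (1 + Real.log (a * C)) := by
  have haC : a ≤ a * C := le_mul_of_one_le_right (by linarith) hC
  have hlogx : 0 ≤ log (1 + log (a * C)) :=
    log_nonneg (by linarith [log_nonneg (show 1 ≤ a * C by linarith)])
  set B := a * C + 2 * a * log (1 + log (a * C))
  have hB : a * C ≤ B := by nlinarith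
  have hfix : a * beta C B ≤ B := by
    have := three_mul_log_one_add_log_le (by linarith) haC (by linarith)
    unfold beta
    nlinarith
  have hslope : 3 * a ≤ B * (1 + log B) := by
    have hlog : log (a * C) ≤ log B := log_le_log (by linarith) hB
    calc 3 * a ≤ a * C * (1 + log (a * C)) := by nlinarith
      _ ≤ B * (1 + log B) := by
          gcongr
          linarith [log_nonneg (show 1 ≤ a * C by linarith)]
  exact Real.sSup_le (fun s ⟨hs, hsβ⟩ ↦ le_of_le_mul_beta (by linarith) (by linarith) hfix
    hslope hs hsβ) (by linarith)
end

section
/- Let a ≥ 1 and C ≥ 1 be reals and define β(s) = C + (3/2)·ln(1 + ln s). Then a·β(s₀) ≥ s₀ where s₀ = a·C + (3/2)·a·ln(1 + ln(a·C)). In other words, the supremum S = sup { s ≥ 1 : a·β(s) ≥ s } satisfies S ≥ a·C + (3/2)·a·ln(1 + ln(a·C)). -/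
/-!
Since `s₀ ≥ aC` and `s ↦ log (1 + log s)` is monotone on `[1, ∞)`, replacing `aC` by `s₀` inside
the double logarithm can only increase `s₀`, so `s₀` lies in the set. The set is bounded above
because `log (1 + log s) = o(s)`, so `sSup` is the genuine supremum and dominates `s₀`.
-/

open Real Filter Asymptotics

theorem bddAbove_setOf_le_add_of_isLittleO {f : ℝ → ℝ} (hf : f =o[atTop] id) (A : ℝ) :
    BddAbove {s : ℝ | s ≤ A + f s} := by
  obtain ⟨N, hN⟩ := eventually_atTop.1
    ((hf.bound (by norm_num : (0 : ℝ) < 1 / 2)).and (eventually_ge_atTop 0))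
  refine ⟨max N (2 * A), fun s hs => ?_⟩
  rcases lt_or_ge s N with hsN | hsN
  · exact le_max_of_le_left hsN.le
  · obtain ⟨hfs, hs0⟩ := hN s hsN
    rw [Real.norm_eq_abs, id, Real.norm_of_nonneg hs0] at hfs
    have hs : s ≤ A + f s := hs
    exact le_max_of_le_right (by linarith [le_abs_self (f s)])

theorem isLittleO_log_one_add_log_id_atTop :
    (fun s => log (1 + log s)) =o[atTop] id := by
  have hlog : (fun s => log (1 + log s)) =o[atTop] fun s => 1 + log s :=
    isLittleO_log_id_atTop.comp_tendsto (tendsto_atTop_add_const_left _ 1 tendsto_log_atTop)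
  exact hlog.trans ((isLittleO_const_id_atTop 1).add isLittleO_log_id_atTop)

theorem log_one_add_log_nonneg {x : ℝ} (hx : 1 ≤ x) : 0 ≤ log (1 + log x) :=
  log_nonneg (le_add_of_nonneg_right (log_nonneg hx))

theorem log_one_add_log_le_log_one_add_log {x y : ℝ} (hx : 1 ≤ x) (hxy : x ≤ y) :
    log (1 + log x) ≤ log (1 + log y) := by
  have hlogx : 0 ≤ log x := log_nonneg hx
  have hlog : log x ≤ log y := log_le_log (by linarith) hxy
  exact log_le_log (by linarith) (by linarith)

/-- Log-log bound inversion (lower bound): for `a ≥ 1`, `C ≥ 1` and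
`β(s) = C + (3/2)·ln(1 + ln s)`, we have `a·β(s₀) ≥ s₀` at
`s₀ = aC + (3/2)·a·ln(1 + ln(aC))`; hence `sup {s ≥ 1 : a·β(s) ≥ s} ≥ s₀`. -/
theorem stmt2 (a C : ℝ) (ha : 1 ≤ a) (hC : 1 ≤ C) :
    a * C + 3 / 2 * a * Real.log (1 + Real.log (a * C)) ≤
      a * (C + 3 / 2 * Real.log (1 + Real.log
        (a * C + 3 / 2 * a * Real.log (1 + Real.log (a * C))))) ∧
    a * C + 3 / 2 * a * Real.log (1 + Real.log (a * C)) ≤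
      sSup {s : ℝ | 1 ≤ s ∧ s ≤ a * (C + 3 / 2 * Real.log (1 + Real.log s))} := by
  have haC : 1 ≤ a * C := one_le_mul_of_one_le_of_one_le ha hC
  set s₀ := a * C + 3 / 2 * a * log (1 + log (a * C))
  have hs₀ : a * C ≤ s₀ :=
    le_add_of_nonneg_right (mul_nonneg (by positivity) (log_one_add_log_nonneg haC))
  have hfix : s₀ ≤ a * (C + 3 / 2 * log (1 + log s₀)) := calc
    s₀ ≤ a * C + 3 / 2 * a * log (1 + log s₀) := by
      gcongr a * C + 3 / 2 * a * ?_
      exact log_one_add_log_le_log_one_add_log haC hs₀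
    _ = a * (C + 3 / 2 * log (1 + log s₀)) := by ring
  have hbdd : BddAbove {s : ℝ | 1 ≤ s ∧ s ≤ a * (C + 3 / 2 * log (1 + log s))} := by
    refine (bddAbove_setOf_le_add_of_isLittleO
      (isLittleO_log_one_add_log_id_atTop.const_mul_left (3 / 2 * a)) (a * C)).mono ?_
    rintro s ⟨-, hs⟩
    simp only [Set.mem_ofPred_eq]
    linarith
  exact ⟨hfix, le_csSup hbdd ⟨haC.trans hs₀, hfix⟩⟩
end

section
/- Let a ≥ 1, C ≥ 1 be reals with C·(1 + ln(a·C)) > 3/2, and set K = (C·(1+ln(aC)))/(C·(1+ln(aC)) − 3/2). Then ln(1 + ln(a·C + (3/2)·a·K·ln(1+ln(aC)))) ≤ K·ln(1 + ln(a·C)). -/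
/-!
Write `L = ln(aC)`, `ℓ = ln(1 + L)` and `T = C(1 + L)`, so that `K - 1 = (3/2)K/T`. The inequality
`ln(x + y) ≤ ln x + y/x` (that is, `ln(1 + t) ≤ t`) applied with `x = aC` gives
`ln(aC + (3/2)aKℓ) ≤ L + (3/2)Kℓ/C`, and applied once more with `x = 1 + L` gives
`ln(1 + L + (3/2)Kℓ/C) ≤ ℓ + (3/2)Kℓ/T = Kℓ`.
-/

open Real

theorem Real.log_add_le_log_add_div {x y : ℝ} (hx : 0 < x) (hxy : 0 < x + y) :
    log (x + y) ≤ log x + y / x := by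
  have hratio : (x + y) / x = 1 + y / x := by field_simp
  have := log_le_sub_one_of_pos (div_pos hxy hx)
  rw [log_div hxy.ne' hx.ne', hratio] at this
  linarith

/-- Key step in inverting the bound `a·(C + (3/2)·ln(1 + ln s)) ≥ s`: with
`K = C(1+ln(aC)) / (C(1+ln(aC)) − 3/2)`,
`ln(1 + ln(aC + (3/2)·a·K·ln(1+ln(aC)))) ≤ K·ln(1 + ln(aC))`. -/
theorem stmt3 (a C : ℝ) (ha : 1 ≤ a) (hC : 1 ≤ C)
    (h : 3 / 2 < C * (1 + Real.log (a * C)))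
    (K : ℝ)
    (hK : K = C * (1 + Real.log (a * C)) / (C * (1 + Real.log (a * C)) - 3 / 2)) :
    Real.log (1 + Real.log
        (a * C + 3 / 2 * a * K * Real.log (1 + Real.log (a * C))))
      ≤ K * Real.log (1 + Real.log (a * C)) := by
  set L := log (a * C)
  set l := log (1 + L)
  have hC0 : 0 < C := by linarith
  have haC : 1 ≤ a * C := one_le_mul_of_one_le_of_one_le ha hC
  have hL : 0 ≤ L := log_nonneg haC
  have hl : 0 ≤ l := log_nonneg (by linarith)
  have hK0 : 0 < K := hK ▸ div_pos (by linarith) (by linarith)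
  have hKsub : 3 / 2 * K / (C * (1 + L)) = K - 1 := by
    have hden : C * (1 + L) - 3 / 2 ≠ 0 := by linarith
    rw [hK, div_sub_one hden]
    field_simp
    ring
  have hy : 0 ≤ 3 / 2 * a * K * l := by positivity
  have hinner : log (a * C + 3 / 2 * a * K * l) ≤ L + 3 / 2 * K * l / C := by
    have hquot : 3 / 2 * a * K * l / (a * C) = 3 / 2 * K * l / C := by field_simp
    have := log_add_le_log_add_div (x := a * C) (y := 3 / 2 * a * K * l)
      (by positivity) (by positivity)
    rwa [hquot] at this
  have houter : 0 ≤ log (a * C + 3 / 2 * a * K * l) := log_nonneg (by linarith)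
  calc log (1 + log (a * C + 3 / 2 * a * K * l))
      ≤ log ((1 + L) + 3 / 2 * K * l / C) := log_le_log (by linarith) (by linarith)
    _ ≤ l + 3 / 2 * K * l / C / (1 + L) :=
        log_add_le_log_add_div (by linarith) (by positivity)
    _ = l + 3 / 2 * K / (C * (1 + L)) * l := by rw [div_div]; ring
    _ = K * l := by rw [hKsub]; ring
end

section
/- Under the setting of nested representative-path confidence intervals: suppose all leaf intervals are valid (μ_ℓ ∈ [L_ℓ, U_ℓ] for all leaves ℓ), the leaf ℓ = s_D is the representative leaf of the node s_1 along the path s_1, ..., s_D, and the leaf interval has half-width w, i.e. U_ℓ − L_ℓ = 2w. Then 2w ≥ max_{k=2,...,D} |V(s_k) − V(s_{k−1})|, where V denotes the maximin value of each node. -/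
/-- A finite rooted maximin game tree: leaves carry a value `μ` and interval
endpoints `L`, `U`; internal nodes are MAX (`isMax = true`) or MIN nodes with a
nonempty finite family of children. -/
inductive GTree where
  | leaf (μ L U : ℝ) : GTree
  | node (isMax : Bool) (n : ℕ) (children : Fin (n + 1) → GTree) : GTree

/-- The maximin value of every node. -/
noncomputable def GTree.val : GTree → ℝ
  | .leaf μ _ _ => μ
  | .node true _ c => ⨆ i, (c i).val
  | .node false _ c => ⨅ i, (c i).val

/-- Lower interval endpoints, propagated upwards. -/
noncomputable def GTree.lb : GTree → ℝ
  | .leaf _ L _ => L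
  | .node true _ c => ⨆ i, (c i).lb
  | .node false _ c => ⨅ i, (c i).lb

/-- Upper interval endpoints, propagated upwards. -/
noncomputable def GTree.ub : GTree → ℝ
  | .leaf _ _ U => U
  | .node true _ c => ⨆ i, (c i).ub
  | .node false _ c => ⨅ i, (c i).ub

/-- All leaf intervals of the tree are valid: `μ ∈ [L, U]`. -/
def GTree.valid : GTree → Prop
  | .leaf μ L U => L ≤ μ ∧ μ ≤ U
  | .node _ _ c => ∀ i, (c i).valid

def GTree.IsRepChild : GTree → GTree → Prop
  | .leaf _ _ _, _ => False
  | .node true _ ch, c => (∃ i, c = ch i) ∧ c.ub = ⨆ j, (ch j).ub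
  | .node false _ ch, c => (∃ i, c = ch i) ∧ c.lb = ⨅ j, (ch j).lb

def GTree.isLeaf : GTree → Prop
  | .leaf _ _ _ => True
  | .node _ _ _ => False

/-!
Along a representative path the confidence intervals are nested: the representative child of a
MAX node shares its parent's upper endpoint and can only lower the lower one (dually at MIN
nodes). Validity puts each value `V(s_k)` in its own interval, hence in the leaf interval
`[L_ℓ, U_ℓ]`, so any two of them differ by at most its width `2w`.
-/

open Set

namespace GTree

def IsRepPath (p : ℕ → GTree) (D : ℕ) : Prop :=
  ∀ k < D, (p k).IsRepChild (p (k + 1))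

theorem valid.val_mem_Icc : ∀ {t : GTree}, t.valid → t.val ∈ Icc t.lb t.ub
  | .leaf _ _ _, h => h
  | .node true _ _, h =>
    ⟨ciSup_mono (Finite.bddAbove_range _) fun i => (valid.val_mem_Icc (h i)).1,
      ciSup_mono (Finite.bddAbove_range _) fun i => (valid.val_mem_Icc (h i)).2⟩
  | .node false _ _, h =>
    ⟨ciInf_mono (Finite.bddBelow_range _) fun i => (valid.val_mem_Icc (h i)).1,
      ciInf_mono (Finite.bddBelow_range _) fun i => (valid.val_mem_Icc (h i)).2⟩

theorem IsRepChild.valid {s c : GTree} (h : s.IsRepChild c) (hs : s.valid) : c.valid := by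
  cases s with
  | leaf => exact h.elim
  | node b _ _ => cases b <;> obtain ⟨⟨i, rfl⟩, -⟩ := h <;> exact hs i

theorem IsRepChild.Icc_subset {s c : GTree} (h : s.IsRepChild c) :
    Icc s.lb s.ub ⊆ Icc c.lb c.ub := by
  rcases s with _ | ⟨_ | _, _, ch⟩
  · exact h.elim
  · obtain ⟨⟨i, rfl⟩, hlb⟩ := h
    exact Icc_subset_Icc hlb.le (ciInf_le (Finite.bddBelow_range fun j => (ch j).ub) i)
  · obtain ⟨⟨i, rfl⟩, hub⟩ := h
    exact Icc_subset_Icc (le_ciSup (Finite.bddAbove_range fun j => (ch j).lb) i) hub.ge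

theorem IsRepPath.valid {p : ℕ → GTree} {D : ℕ} (hp : IsRepPath p D) (h0 : (p 0).valid) :
    ∀ k ≤ D, (p k).valid
  | 0, _ => h0
  | k + 1, hk => (hp k hk).valid (hp.valid h0 k (Nat.le_of_succ_le hk))

theorem IsRepPath.Icc_subset {p : ℕ → GTree} {D k : ℕ} (hp : IsRepPath p D) (hk : k ≤ D) :
    Icc (p k).lb (p k).ub ⊆ Icc (p D).lb (p D).ub := by
  induction hk using Nat.decreasingInduction with
  | self => exact Subset.rfl
  | of_succ k hk ih => exact (hp k hk).Icc_subset.trans ih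

theorem IsRepPath.val_mem_Icc {p : ℕ → GTree} {D k : ℕ} (hp : IsRepPath p D)
    (h0 : (p 0).valid) (hk : k ≤ D) : (p k).val ∈ Icc (p D).lb (p D).ub :=
  hp.Icc_subset hk (hp.valid h0 k hk).val_mem_Icc

end GTree

theorem stmt6_general (D : ℕ) (p : ℕ → GTree) (w : ℝ)
    (hvalid : (p 0).valid)
    (hrep : ∀ k < D, (p k).IsRepChild (p (k + 1)))
    (hw : (p D).ub - (p D).lb = 2 * w) :
    ∀ k < D, |(p (k + 1)).val - (p k).val| ≤ 2 * w := by
  have hp : GTree.IsRepPath p D := hrep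
  intro k hk
  rw [← hw, ← Real.dist_eq]
  exact Real.dist_le_of_mem_Icc (hp.val_mem_Icc hvalid hk) (hp.val_mem_Icc hvalid hk.le)

/-- If all leaf intervals below `s_1 = p 0` are valid, `ℓ = p D` is the
representative leaf of `p 0` along the path `p 0, …, p D`, and the leaf interval
has half-width `w` (`U_ℓ - L_ℓ = 2w`), then `2w ≥ |V(s_k) - V(s_{k-1})|` for
every consecutive pair along the path. -/
theorem stmt6 (D : ℕ) (hD : 1 ≤ D) (p : ℕ → GTree) (w : ℝ)
    (hvalid : (p 0).valid)
    (hrep : ∀ k < D, (p k).IsRepChild (p (k + 1)))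
    (hleaf : (p D).isLeaf)
    (hw : (p D).ub - (p D).lb = 2 * w) :
    ∀ k < D, |(p (k + 1)).val - (p k).val| ≤ 2 * w :=
  stmt6_general D p w hvalid hrep hw
end

section
/- Consider finitely many arms i ∈ S, each with an interval [L_i, U_i]. Define the UGapE index B_i = max_{j ≠ i} U_j − L_i, let b = argmin_i B_i and c = argmax_{j ≠ b} U_j. Then: (1) if U_b − L_b ≥ U_c − L_c (i.e. b has the wider interval and is selected) then U_c ≤ U_b; (2) if U_c − L_c ≥ U_b − L_b (i.e. c is selected) then L_c ≤ L_b. -/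
/-!
Since `c` maximizes `U` off `b`, the index of `b` is `B_b = U_c − L_b`, while every other index
satisfies `B_i ≤ max U_b U_c − L_i`. Minimality of `B_b` against `B_c` therefore gives
`U_c − L_b ≤ max U_b U_c − L_c`, and both claims follow from this one inequality by comparing
`U_b` with `U_c`.
-/

section

variable {ι : Type*} {U : ι → ℝ} {b c : ι}

lemma csSup_image_ne_eq_of_forall_ne_le (hcb : c ≠ b) (hc : ∀ j, j ≠ b → U j ≤ U c) :
    sSup (U '' {j | j ≠ b}) = U c :=
  IsGreatest.csSup_eq ⟨⟨c, hcb, rfl⟩, by rintro _ ⟨j, hj, rfl⟩; exact hc j hj⟩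

lemma csSup_image_ne_le_max (hcb : c ≠ b) (hc : ∀ j, j ≠ b → U j ≤ U c) (i : ι) :
    sSup (U '' {j | j ≠ i}) ≤ max (U b) (U c) := by
  obtain ⟨j₀, hj₀⟩ : ∃ j, j ≠ i := by
    by_cases hbi : b = i
    exacts [⟨c, hbi ▸ hcb⟩, ⟨b, hbi⟩]
  refine csSup_le ⟨U j₀, j₀, hj₀, rfl⟩ ?_
  rintro _ ⟨j, -, rfl⟩
  by_cases hjb : j = b
  · exact hjb ▸ le_max_left _ _
  · exact (hc j hjb).trans (le_max_right _ _)

end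

lemma wider_interval_bounds {Ub Lb Uc Lc : ℝ} (h : Uc - Lb ≤ max Ub Uc - Lc) :
    (Uc - Lc ≤ Ub - Lb → Uc ≤ Ub) ∧ (Ub - Lb ≤ Uc - Lc → Lc ≤ Lb) := by
  rcases le_total Ub Uc with hle | hle
  · rw [max_eq_right hle] at h
    exact ⟨fun _ => by linarith, fun _ => by linarith⟩
  · rw [max_eq_left hle] at h
    exact ⟨fun _ => hle, fun _ => by linarith⟩

theorem stmt7_general {ι : Type*}
    (L U : ι → ℝ)
    (B : ι → ℝ) (hB : ∀ i, B i = sSup (U '' {j | j ≠ i}) - L i)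
    (b c : ι) (hb : ∀ i, B b ≤ B i)
    (hcb : c ≠ b) (hc : ∀ j, j ≠ b → U j ≤ U c) :
    (U c - L c ≤ U b - L b → U c ≤ U b) ∧
    (U b - L b ≤ U c - L c → L c ≤ L b) := by
  apply wider_interval_bounds
  have hBb : B b = U c - L b := by rw [hB, csSup_image_ne_eq_of_forall_ne_le hcb hc]
  have hBc : B c ≤ max (U b) (U c) - L c := by
    rw [hB]; exact sub_le_sub_right (csSup_image_ne_le_max hcb hc c) _
  linarith [hb c]

/-- UGapE structural lemma: with `B_i = max_{j≠i} U_j − L_i`, `b` a minimizer of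
`B` and `c` a maximizer of `U` over the other arms, (1) if `b` has the wider
interval then `U_c ≤ U_b`; (2) if `c` has the wider interval then `L_c ≤ L_b`. -/
theorem stmt7 {ι : Type*} [Fintype ι] (hcard : 1 < Fintype.card ι)
    (L U : ι → ℝ) (hLU : ∀ i, L i ≤ U i)
    (B : ι → ℝ) (hB : ∀ i, B i = sSup (U '' {j | j ≠ i}) - L i)
    (b c : ι) (hb : ∀ i, B b ≤ B i)
    (hcb : c ≠ b) (hc : ∀ j, j ≠ b → U j ≤ U c) :
    (U c - L c ≤ U b - L b → U c ≤ U b) ∧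
    (U b - L b ≤ U c - L c → L c ≤ L b) :=
  stmt7_general L U B hB b c hb hcb hc
end

section
/- Under the UGapE setting (arms with intervals [L_i, U_i], b = argmin_i B_i where B_i = max_{j≠i} U_j − L_i, and c = argmax_{j≠b} U_j): if the stopping condition fails, i.e. U_c − L_b > ε, and the selected arm R ∈ {b, c} is the one with the wider interval, then U_R − L_R > ε. -/
/-!
Since `c` has the largest upper bound among the arms other than `b`, the index of `b` is
`B b = U c - L b`, while `B c ≤ max (U b) (U c) - L c`. Minimality of `B b` therefore gives
`U c - L b ≤ max (U b) (U c) - L c`. Combined with the choice of `R` as the wider interval,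
this forces `U c ≤ U b` when `R = b` and `L c ≤ L b` when `R = c`; in both cases
`U R - L R ≥ U c - L b > ε`.
-/

namespace UGapE

variable {ι : Type*} {L U B : ι → ℝ} {b c : ι}

theorem sSup_image_ne_eq (hcb : c ≠ b) (hc : ∀ j, j ≠ b → U j ≤ U c) :
    sSup (U '' {j | j ≠ b}) = U c :=
  IsGreatest.csSup_eq ⟨⟨c, hcb, rfl⟩, by rintro _ ⟨j, hj, rfl⟩; exact hc j hj⟩

theorem sSup_image_ne_le_max (hcb : c ≠ b) (hc : ∀ j, j ≠ b → U j ≤ U c) :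
    sSup (U '' {j | j ≠ c}) ≤ max (U b) (U c) :=
  csSup_le ⟨U b, b, hcb.symm, rfl⟩ <| by
    rintro _ ⟨j, -, rfl⟩
    rcases eq_or_ne j b with rfl | hjb
    · exact le_max_left _ _
    · exact (hc j hjb).trans (le_max_right _ _)

theorem sub_le_max_sub (hB : ∀ i, B i = sSup (U '' {j | j ≠ i}) - L i) (hb : B b ≤ B c)
    (hcb : c ≠ b) (hc : ∀ j, j ≠ b → U j ≤ U c) :
    U c - L b ≤ max (U b) (U c) - L c :=
  calc U c - L b = B b := by rw [hB b, sSup_image_ne_eq hcb hc]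
    _ ≤ B c := hb
    _ ≤ max (U b) (U c) - L c := by
      rw [hB c]
      exact sub_le_sub_right (sSup_image_ne_le_max hcb hc) _

theorem upper_le_of_wider_left (h : U c - L b ≤ max (U b) (U c) - L c)
    (hwide : U c - L c ≤ U b - L b) : U c ≤ U b := by
  by_contra! hlt
  rw [max_eq_right hlt.le] at h
  linarith

theorem lower_le_of_wider_right (h : U c - L b ≤ max (U b) (U c) - L c)
    (hwide : U b - L b ≤ U c - L c) : L c ≤ L b := by
  rcases le_total (U b) (U c) with hle | hle
  · rw [max_eq_right hle] at h
    linarith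
  · rw [max_eq_left hle] at h
    linarith

end UGapE

theorem stmt8_general {ι : Type*}
    (L U : ι → ℝ) (ε : ℝ)
    (B : ι → ℝ) (hB : ∀ i, B i = sSup (U '' {j | j ≠ i}) - L i)
    (b c : ι) (hb : ∀ i, B b ≤ B i)
    (hcb : c ≠ b) (hc : ∀ j, j ≠ b → U j ≤ U c)
    (R : ι) (hR : R = b ∨ R = c)
    (hwide : U b - L b ≤ U R - L R ∧ U c - L c ≤ U R - L R)
    (hstop : ε < U c - L b) :
    ε < U R - L R := by
  have hgap := UGapE.sub_le_max_sub hB (hb c) hcb hc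
  rcases hR with rfl | rfl
  · linarith [UGapE.upper_le_of_wider_left hgap hwide.2]
  · linarith [UGapE.lower_le_of_wider_right hgap hwide.1]

/-- UGapE: if the stopping condition fails (`U_c − L_b > ε`) and the selected arm
`R ∈ {b, c}` is the one with the wider interval, then `U_R − L_R > ε`. -/
theorem stmt8 {ι : Type*} [Fintype ι] (hcard : 1 < Fintype.card ι)
    (L U : ι → ℝ) (hLU : ∀ i, L i ≤ U i) (ε : ℝ) (hε : 0 ≤ ε)
    (B : ι → ℝ) (hB : ∀ i, B i = sSup (U '' {j | j ≠ i}) - L i)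
    (b c : ι) (hb : ∀ i, B b ≤ B i)
    (hcb : c ≠ b) (hc : ∀ j, j ≠ b → U j ≤ U c)
    (R : ι) (hR : R = b ∨ R = c)
    (hwide : U b - L b ≤ U R - L R ∧ U c - L c ≤ U R - L R)
    (hstop : ε < U c - L b) :
    ε < U R - L R :=
  stmt8_general L U ε B hB b c hb hcb hc R hR hwide hstop
end

section
/- Let d(x,y) = x·ln(x/y) + (1−x)·ln((1−x)/(1−y)) denote the binary Kullback–Leibler divergence for x, y ∈ (0,1). Then for all δ ∈ (0, 1/2), d(δ, 1−δ) ≥ ln(1/(2.4·δ)). -/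
/-!
Since `d(δ, 1-δ) = (1-2δ) log((1-δ)/δ) = g(δ) - log δ` with
`g(x) = 2x log x + (1-2x) log(1-x)`, the claim is `g ≥ -log (12/5)` on `(0, 1)`.
Writing `g(x) = 2φ(x) + 2φ(1-x) - log(1-x)` with `φ(t) = t log t` shows that `g` is convex,
so it lies above its tangents; the tangent at `1/4` handles `x ≤ 2/7` and the tangent at `1/3`
handles `x ≥ 2/7`. At the break point `2/7` these tangent values reduce to `5^21 ≤ e 3^30` and
`e 5^14 ≤ 2^34`.
-/

/-- Binary Kullback–Leibler divergence between Bernoulli distributions with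
parameters `x` and `y`. -/
noncomputable def klBern (x y : ℝ) : ℝ :=
  x * Real.log (x / y) + (1 - x) * Real.log ((1 - x) / (1 - y))

open Real

lemma log_le_log_add_div_sub_one {x y : ℝ} (hx : 0 < x) (hy : 0 < y) :
    log x ≤ log y + x / y - 1 := by
  have h := log_le_sub_one_of_pos (div_pos hx hy)
  rw [log_div hx.ne' hy.ne'] at h
  linarith

lemma mul_log_le_mul_log_add_sub {x y : ℝ} (hx : 0 < x) (hy : 0 < y) :
    x * log y ≤ x * log x + y - x := by
  have h := mul_le_mul_of_nonneg_left (log_le_log_add_div_sub_one hy hx) hx.le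
  rwa [mul_sub, mul_add, mul_div_cancel₀ _ hx.ne', mul_one] at h

lemma tangent_le_two_mul_mul_log_add_mul_log_one_sub {a x : ℝ} (ha0 : 0 < a) (ha1 : a < 1)
    (hx0 : 0 < x) (hx1 : x < 1) :
    2 * a * log a + (1 - 2 * a) * log (1 - a)
        + (2 * log a - 2 * log (1 - a) + 1 / (1 - a)) * (x - a)
      ≤ 2 * x * log x + (1 - 2 * x) * log (1 - x) := by
  have ha1' : 0 < 1 - a := by linarith
  have hx1' : 0 < 1 - x := by linarith
  have h₁ := mul_log_le_mul_log_add_sub hx0 ha0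
  have h₂ := mul_log_le_mul_log_add_sub hx1' ha1'
  have h₃ := log_le_log_add_div_sub_one hx1' ha1'
  have hdiv : (1 - x) / (1 - a) = 1 + (a - x) * (1 / (1 - a)) := by field_simp; ring
  rw [hdiv] at h₃
  linarith

lemma log_twelve_fifths : log (12 / 5) = 2 * log 2 + log 3 - log 5 := by
  rw [show (12 / 5 : ℝ) = 2 ^ 2 * 3 / 5 by norm_num, log_div (by norm_num) (by norm_num),
    log_mul (by norm_num) (by norm_num), log_pow]
  push_cast; ring

lemma twentyone_mul_log_five_le : 21 * log 5 ≤ 30 * log 3 + 1 := by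
  have h := log_le_log (by positivity) (show (5 : ℝ) ^ 21 ≤ 3 ^ 30 * exp 1 by
    nlinarith [exp_one_gt_d9])
  rw [log_mul (by positivity) (exp_pos 1).ne', log_exp, log_pow, log_pow] at h
  push_cast at h; linarith

lemma one_add_fourteen_mul_log_five_le : 1 + 14 * log 5 ≤ 34 * log 2 := by
  have h := log_le_log (by positivity) (show exp 1 * 5 ^ 14 ≤ (2 : ℝ) ^ 34 by
    nlinarith [exp_one_lt_d9])
  rw [log_mul (exp_pos 1).ne' (by positivity), log_exp, log_pow, log_pow] at h
  push_cast at h; linarith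

lemma one_le_log_three : 1 ≤ log 3 := by
  rw [le_log_iff_exp_le (by norm_num)]
  linarith [exp_one_lt_d9]

lemma neg_log_twelve_fifths_le {x : ℝ} (hx0 : 0 < x) (hx1 : x < 1) :
    -log (12 / 5) ≤ 2 * x * log x + (1 - 2 * x) * log (1 - x) := by
  rw [log_twelve_fifths]
  have h3 := one_le_log_three
  rcases le_or_gt x (2 / 7) with hx | hx
  · have h := tangent_le_two_mul_mul_log_add_mul_log_one_sub (a := 1 / 4) (by norm_num)
      (by norm_num) hx0 hx1
    have hlog : log (1 / 4) = -(2 * log 2) := by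
      rw [one_div, log_inv, show (4 : ℝ) = 2 ^ 2 by norm_num, log_pow]; push_cast; ring
    have hlog' : log (1 - 1 / 4) = log 3 - 2 * log 2 := by
      rw [show (1 - 1 / 4 : ℝ) = 3 / 2 ^ 2 by norm_num, log_div (by norm_num) (by norm_num),
        log_pow]; push_cast; ring
    rw [hlog, hlog'] at h
    nlinarith [twentyone_mul_log_five_le, mul_nonneg (sub_nonneg.2 hx) (sub_nonneg.2 h3)]
  · have h := tangent_le_two_mul_mul_log_add_mul_log_one_sub (a := 1 / 3) (by norm_num)
      (by norm_num) hx0 hx1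
    have hlog : log (1 / 3) = -log 3 := by rw [one_div, log_inv]
    have hlog' : log (1 - 1 / 3) = log 2 - log 3 := by
      rw [show (1 - 1 / 3 : ℝ) = 2 / 3 by norm_num, log_div (by norm_num) (by norm_num)]
    rw [hlog, hlog'] at h
    have h2 : log 2 ≤ 3 / 4 := by linarith [log_two_lt_d9]
    nlinarith [one_add_fourteen_mul_log_five_le,
      mul_nonneg (sub_nonneg.2 hx.le) (sub_nonneg.2 h2)]

lemma klBern_one_sub_eq {δ : ℝ} (h0 : 0 < δ) (h1 : δ < 1) :
    klBern δ (1 - δ) = 2 * δ * log δ + (1 - 2 * δ) * log (1 - δ) - log δ := by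
  rw [klBern, sub_sub_cancel, log_div h0.ne' (by linarith), log_div (by linarith) h0.ne']
  ring

/-- For all `δ ∈ (0, 1/2)`, `d(δ, 1−δ) ≥ ln(1/(2.4·δ))`. -/
theorem stmt10 (δ : ℝ) (h1 : 0 < δ) (h2 : δ < 1 / 2) :
    Real.log (1 / (2.4 * δ)) ≤ klBern δ (1 - δ) := by
  have hδ : δ < 1 := by linarith
  rw [klBern_one_sub_eq h1 hδ, one_div, log_inv, log_mul (by norm_num) h1.ne',
    show (2.4 : ℝ) = 12 / 5 by norm_num]
  linarith [neg_log_twelve_fifths_le h1 hδ]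
end

section
/- Let d be the binary KL divergence, and fix μ₁ > μ₂ in (0,1) and weights w₁, w₂ > 0. Then inf over pairs (λ₁, λ₂) ∈ (0,1)² with λ₁ ≤ λ₂ of [w₁·d(μ₁, λ₁) + w₂·d(μ₂, λ₂)] equals w₁·d(μ₁, m) + w₂·d(μ₂, m), where m = (w₁μ₁ + w₂μ₂)/(w₁ + w₂) is the weighted mean. -/
open Real Set

lemma mul_log_div_sub_mul_log_div (x : ℝ) {y m : ℝ} (hy : y ≠ 0) (hm : m ≠ 0) :
    x * log (x / y) - x * log (x / m) = x * log (m / y) := by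
  rcases eq_or_ne x 0 with rfl | hx
  · simp
  · rw [log_div hx hy, log_div hx hm, log_div hm hy]
    ring

lemma klBern_sub_klBern (x : ℝ) {y m : ℝ} (hy : y ∈ Ioo (0 : ℝ) 1) (hm : m ∈ Ioo (0 : ℝ) 1) :
    klBern x y - klBern x m = x * log (m / y) + (1 - x) * log ((1 - m) / (1 - y)) := by
  have h₁ := mul_log_div_sub_mul_log_div x hy.1.ne' hm.1.ne'
  have h₂ := mul_log_div_sub_mul_log_div (1 - x) (sub_pos.2 hy.2).ne' (sub_pos.2 hm.2).ne'
  unfold klBern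
  linarith

lemma klBern_add_tangent_le {x y m : ℝ} (hx : x ∈ Icc (0 : ℝ) 1) (hy : y ∈ Ioo (0 : ℝ) 1)
    (hm : m ∈ Ioo (0 : ℝ) 1) :
    klBern x m + (y - m) * (m - x) / (m * (1 - m)) ≤ klBern x y := by
  obtain ⟨hy₀, hy₁⟩ := hy
  obtain ⟨hm₀, hm₁⟩ := hm
  have hy₁' : 0 < 1 - y := sub_pos.2 hy₁
  have hm₁' : 0 < 1 - m := sub_pos.2 hm₁
  have hlog₁ : (m - y) / m ≤ log (m / y) := by
    convert one_sub_inv_le_log_of_pos (div_pos hm₀ hy₀) using 1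
    field_simp
  have hlog₂ : (y - m) / (1 - m) ≤ log ((1 - m) / (1 - y)) := by
    convert one_sub_inv_le_log_of_pos (div_pos hm₁' hy₁') using 1
    field_simp
    ring
  have htangent : (y - m) * (m - x) / (m * (1 - m))
      = x * ((m - y) / m) + (1 - x) * ((y - m) / (1 - m)) := by
    field_simp
    ring
  have hdiff := klBern_sub_klBern x ⟨hy₀, hy₁⟩ ⟨hm₀, hm₁⟩
  linarith [mul_le_mul_of_nonneg_left hlog₁ hx.1,
    mul_le_mul_of_nonneg_left hlog₂ (sub_nonneg.2 hx.2)]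

lemma weighted_klBern_le_of_balanced {μ₁ μ₂ w₁ w₂ m l₁ l₂ : ℝ} (hμ₁ : μ₁ ∈ Icc (0 : ℝ) 1)
    (hμ₂ : μ₂ ∈ Icc (0 : ℝ) 1) (hw₁ : 0 ≤ w₁) (hw₂ : 0 ≤ w₂) (hm : m ∈ Ioo (0 : ℝ) 1)
    (hbalanced : w₁ * (m - μ₁) + w₂ * (m - μ₂) = 0) (hμ₂m : μ₂ ≤ m)
    (hl₁ : l₁ ∈ Ioo (0 : ℝ) 1) (hl₂ : l₂ ∈ Ioo (0 : ℝ) 1) (hl : l₁ ≤ l₂) :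
    w₁ * klBern μ₁ m + w₂ * klBern μ₂ m ≤ w₁ * klBern μ₁ l₁ + w₂ * klBern μ₂ l₂ := by
  have hc : 0 < m * (1 - m) := mul_pos hm.1 (sub_pos.2 hm.2)
  have hcorrection : 0 ≤ w₁ * ((l₁ - m) * (m - μ₁) / (m * (1 - m)))
      + w₂ * ((l₂ - m) * (m - μ₂) / (m * (1 - m))) := by
    have hsplit : w₁ * ((l₁ - m) * (m - μ₁) / (m * (1 - m)))
        + w₂ * ((l₂ - m) * (m - μ₂) / (m * (1 - m)))
        = w₂ * (m - μ₂) * (l₂ - l₁) / (m * (1 - m)) := by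
      linear_combination (l₁ - m) / (m * (1 - m)) * hbalanced
    rw [hsplit]
    exact div_nonneg (mul_nonneg (mul_nonneg hw₂ (sub_nonneg.2 hμ₂m)) (sub_nonneg.2 hl)) hc.le
  have h₁ := mul_le_mul_of_nonneg_left (klBern_add_tangent_le hμ₁ hl₁ hm) hw₁
  have h₂ := mul_le_mul_of_nonneg_left (klBern_add_tangent_le hμ₂ hl₂ hm) hw₂
  rw [mul_add] at h₁ h₂
  linarith

section WeightedMean

variable {μ₁ μ₂ w₁ w₂ : ℝ}

lemma weightedMean_balanced (hw : w₁ + w₂ ≠ 0) :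
    w₁ * ((w₁ * μ₁ + w₂ * μ₂) / (w₁ + w₂) - μ₁)
      + w₂ * ((w₁ * μ₁ + w₂ * μ₂) / (w₁ + w₂) - μ₂) = 0 := by
  field_simp
  ring

lemma le_weightedMean (hle : μ₂ ≤ μ₁) (hw₁ : 0 ≤ w₁) (hw : 0 < w₁ + w₂) :
    μ₂ ≤ (w₁ * μ₁ + w₂ * μ₂) / (w₁ + w₂) := by
  rw [le_div_iff₀ hw]
  nlinarith

lemma weightedMean_mem_Ioo (hμ₁ : μ₁ ∈ Ioo (0 : ℝ) 1) (hμ₂ : μ₂ ∈ Ioo (0 : ℝ) 1)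
    (hw₁ : 0 ≤ w₁) (hw₂ : 0 ≤ w₂) (hw : 0 < w₁ + w₂) :
    (w₁ * μ₁ + w₂ * μ₂) / (w₁ + w₂) ∈ Ioo (0 : ℝ) 1 := by
  convert convex_iff_div.1 (convex_Ioo (0 : ℝ) 1) hμ₁ hμ₂ hw₁ hw₂ hw using 1
  simp only [smul_eq_mul]
  field_simp

end WeightedMean

/-- For `μ₁ > μ₂` and positive weights, the infimum of
`w₁·d(μ₁, λ₁) + w₂·d(μ₂, λ₂)` over `λ₁ ≤ λ₂` in `(0,1)²` is attained at
`λ₁ = λ₂ = m`, the weighted mean `m = (w₁μ₁ + w₂μ₂)/(w₁ + w₂)`. -/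
theorem stmt13 (μ₁ μ₂ w₁ w₂ : ℝ)
    (hμ₁ : μ₁ ∈ Set.Ioo (0 : ℝ) 1) (hμ₂ : μ₂ ∈ Set.Ioo (0 : ℝ) 1)
    (hlt : μ₂ < μ₁) (hw₁ : 0 < w₁) (hw₂ : 0 < w₂) :
    sInf {x : ℝ | ∃ l₁ l₂ : ℝ, l₁ ∈ Set.Ioo (0 : ℝ) 1 ∧ l₂ ∈ Set.Ioo (0 : ℝ) 1 ∧
        l₁ ≤ l₂ ∧ x = w₁ * klBern μ₁ l₁ + w₂ * klBern μ₂ l₂}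
      = w₁ * klBern μ₁ ((w₁ * μ₁ + w₂ * μ₂) / (w₁ + w₂))
        + w₂ * klBern μ₂ ((w₁ * μ₁ + w₂ * μ₂) / (w₁ + w₂)) := by
  have hw : 0 < w₁ + w₂ := add_pos hw₁ hw₂
  have hm := weightedMean_mem_Ioo hμ₁ hμ₂ hw₁.le hw₂.le hw
  refine IsLeast.csInf_eq ⟨⟨_, _, hm, hm, le_rfl, rfl⟩, ?_⟩
  rintro _ ⟨l₁, l₂, hl₁, hl₂, hl, rfl⟩
  exact weighted_klBern_le_of_balanced (Ioo_subset_Icc_self hμ₁) (Ioo_subset_Icc_self hμ₂)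
    hw₁.le hw₂.le hm (weightedMean_balanced hw.ne') (le_weightedMean hlt.le hw₁.le hw) hl₁ hl₂ hl
end

section
/- LUCB exploration dichotomy: let arms i ∈ S have intervals [L_i, U_i] and empirical values V̂_i, let b = argmax_i V̂_i and c = argmax_{j ≠ b} U_j, and let γ be a real number. Assume the true best value V* and second-best value V₂* satisfy V₂* ≤ γ ≤ V*, each true arm value V_i lies in [L_i, U_i], and the stopping condition fails: U_c − L_b > ε. Suppose moreover V̂_c ≤ V̂_b, μ̂-based intervals satisfy V̂_i = (L_i + U_i)/2 for the two arms b and c. Then at least one of the arms ℓ ∈ {b, c} satisfies both γ ∈ [L_ℓ, U_ℓ] and U_ℓ − L_ℓ > ε. -/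
/-!
Since `γ` is at most the best true value and at least every other true value, `γ` can lie
neither above both intervals nor below both. It cannot lie in the gap between them either:
a gap above `[L_b, U_b]` would put the midpoint of `c` above that of `b`, and a gap above
`[L_c, U_c]` contradicts `U_c − L_b > ε ≥ 0`. So `γ` lies in one of the two intervals. If
that interval has width at most `ε`, then `U_c − L_b > ε` together with the order of the
midpoints forces the other interval to strictly contain it and to have width greater than `ε`.
-/

open Set

section TwoIntervals

variable {Lb Ub Lc Uc ε γ : ℝ}

lemma mem_Icc_or_mem_Icc_of_stop_fails (hε : 0 ≤ ε) (hmid : Lc + Uc ≤ Lb + Ub)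
    (hstop : ε < Uc - Lb) (hlow : Lb ≤ γ ∨ Lc ≤ γ) (hup : γ ≤ Ub ∨ γ ≤ Uc) :
    γ ∈ Icc Lb Ub ∨ γ ∈ Icc Lc Uc := by
  simp only [mem_Icc]
  rcases le_or_gt Lb γ with hLb | hLb
  · rcases le_or_gt γ Ub with hUb | hUb
    · exact .inl ⟨hLb, hUb⟩
    · have hLc : Lc ≤ γ := by
        by_contra! hLc
        linarith
      exact .inr ⟨hLc, hup.resolve_left hUb.not_ge⟩
  · have hLc := hlow.resolve_left hLb.not_ge
    refine .inr ⟨hLc, ?_⟩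
    by_contra! hUc
    linarith

lemma narrow_b_forces_wide_c (hmid : Lc + Uc ≤ Lb + Ub) (hstop : ε < Uc - Lb)
    (hγ : γ ∈ Icc Lb Ub) (hw : Ub - Lb ≤ ε) : γ ∈ Icc Lc Uc ∧ ε < Uc - Lc := by
  obtain ⟨hLb, hUb⟩ := hγ
  have hLc : Lc < Lb := by linarith
  exact ⟨⟨by linarith, by linarith⟩, by linarith⟩

lemma narrow_c_forces_wide_b (hmid : Lc + Uc ≤ Lb + Ub) (hstop : ε < Uc - Lb)
    (hγ : γ ∈ Icc Lc Uc) (hw : Uc - Lc ≤ ε) : γ ∈ Icc Lb Ub ∧ ε < Ub - Lb := by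
  obtain ⟨hLc, hUc⟩ := hγ
  have hUb : Uc < Ub := by linarith
  exact ⟨⟨by linarith, by linarith⟩, by linarith⟩

lemma exists_wide_of_mem_Icc_or_mem_Icc (hmid : Lc + Uc ≤ Lb + Ub) (hstop : ε < Uc - Lb)
    (hγ : γ ∈ Icc Lb Ub ∨ γ ∈ Icc Lc Uc) :
    (γ ∈ Icc Lb Ub ∧ ε < Ub - Lb) ∨ (γ ∈ Icc Lc Uc ∧ ε < Uc - Lc) := by
  rcases hγ with hb | hc
  · by_cases hw : ε < Ub - Lb
    · exact .inl ⟨hb, hw⟩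
    · exact .inr (narrow_b_forces_wide_c hmid hstop hb (not_lt.mp hw))
  · by_cases hw : ε < Uc - Lc
    · exact .inr ⟨hc, hw⟩
    · exact .inl (narrow_c_forces_wide_b hmid hstop hc (not_lt.mp hw))

end TwoIntervals

section Arms

variable {ι : Type*} {V L U : ι → ℝ} {γ : ℝ} {sstar b c : ι}

lemma lower_le_of_ne_best (hvalid : ∀ i, L i ≤ V i ∧ V i ≤ U i)
    (hγ₂ : ∀ j, j ≠ sstar → V j ≤ γ) (hcb : c ≠ b) : L b ≤ γ ∨ L c ≤ γ := by
  by_cases hbs : b = sstar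
  · exact .inr ((hvalid c).1.trans (hγ₂ c (hbs ▸ hcb)))
  · exact .inl ((hvalid b).1.trans (hγ₂ b hbs))

lemma le_upper_of_best (hvalid : ∀ i, L i ≤ V i ∧ V i ≤ U i) (hγ₁ : γ ≤ V sstar)
    (hc : ∀ j, j ≠ b → U j ≤ U c) : γ ≤ U b ∨ γ ≤ U c := by
  by_cases hsb : sstar = b
  · exact .inl (hsb ▸ hγ₁.trans (hvalid sstar).2)
  · exact .inr (hγ₁.trans ((hvalid sstar).2.trans (hc sstar hsb)))

end Arms

theorem stmt16_general {ι : Type*}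
    (V L U Vhat : ι → ℝ) (ε γ : ℝ) (hε : 0 ≤ ε)
    (hvalid : ∀ i, L i ≤ V i ∧ V i ≤ U i)
    (sstar : ι)
    (hγ₁ : γ ≤ V sstar) (hγ₂ : ∀ j, j ≠ sstar → V j ≤ γ)
    (b c : ι)
    (hcb : c ≠ b) (hc : ∀ j, j ≠ b → U j ≤ U c)
    (hmidb : Vhat b = (L b + U b) / 2) (hmidc : Vhat c = (L c + U c) / 2)
    (hVhat : Vhat c ≤ Vhat b)
    (hstop : ε < U c - L b) :
    ∃ ℓ, (ℓ = b ∨ ℓ = c) ∧ L ℓ ≤ γ ∧ γ ≤ U ℓ ∧ ε < U ℓ - L ℓ := by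
  have hmid : L c + U c ≤ L b + U b := by
    rw [hmidb, hmidc] at hVhat
    linarith
  have hmem := mem_Icc_or_mem_Icc_of_stop_fails hε hmid hstop
    (lower_le_of_ne_best hvalid hγ₂ hcb) (le_upper_of_best hvalid hγ₁ hc)
  rcases exists_wide_of_mem_Icc_or_mem_Icc hmid hstop hmem with ⟨⟨hL, hU⟩, hw⟩ | ⟨⟨hL, hU⟩, hw⟩
  · exact ⟨b, .inl rfl, hL, hU, hw⟩
  · exact ⟨c, .inr rfl, hL, hU, hw⟩

/-- LUCB exploration dichotomy: with `b` the arm of maximal empirical value,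
`c` the arm of maximal upper bound among the others, valid intervals containing
the true values, `γ` between the second-best and best true values, midpoint
empirical values, and a failing stopping condition `U_c − L_b > ε`, at least one
arm `ℓ ∈ {b, c}` satisfies both `γ ∈ [L_ℓ, U_ℓ]` and `U_ℓ − L_ℓ > ε`. -/
theorem stmt16 {ι : Type*} [Fintype ι]
    (V L U Vhat : ι → ℝ) (ε γ : ℝ) (hε : 0 ≤ ε)
    (hvalid : ∀ i, L i ≤ V i ∧ V i ≤ U i)
    (sstar : ι) (hstar : ∀ i, V i ≤ V sstar)
    (hγ₁ : γ ≤ V sstar) (hγ₂ : ∀ j, j ≠ sstar → V j ≤ γ)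
    (b c : ι) (hb : ∀ i, Vhat i ≤ Vhat b)
    (hcb : c ≠ b) (hc : ∀ j, j ≠ b → U j ≤ U c)
    (hmidb : Vhat b = (L b + U b) / 2) (hmidc : Vhat c = (L c + U c) / 2)
    (hVhat : Vhat c ≤ Vhat b)
    (hstop : ε < U c - L b) :
    ∃ ℓ, (ℓ = b ∨ ℓ = c) ∧ L ℓ ≤ γ ∧ γ ≤ U ℓ ∧ ε < U ℓ - L ℓ :=
  stmt16_general V L U Vhat ε γ hε hvalid sstar hγ₁ hγ₂ b c hcb hc hmidb hmidc hVhat hstop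
end

section
/- Under the UGapE setting with valid intervals: let arms i ∈ S have true values V_i ∈ [L_i, U_i], let s* be the unique maximizer of V, b = argmin_i B_i (B_i = max_{j≠i} U_j − L_i), c = argmax_{j≠b} U_j, and suppose U_c − L_b > ε. If the selected arm R ∈ {b, c} (the one with larger U − L) is different from s*, then 2·(U_R − L_R) ≥ V(s*) − V(R). -/
/-- UGapE, cases where the selected arm differs from the optimal one: if the
algorithm has not stopped (`U_c − L_b > ε`), `s*` is the unique maximizer of the
true values, and the wider-interval arm `R ∈ {b, c}` is different from `s*`,
then `2·(U_R − L_R) ≥ V(s*) − V(R)`. -/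
theorem stmt18 {ι : Type*} [Fintype ι]
    (hcard : 1 < Fintype.card ι)
    (V L U : ι → ℝ) (ε : ℝ) (hε : 0 ≤ ε)
    (hvalid : ∀ i, L i ≤ V i ∧ V i ≤ U i)
    (sstar : ι) (hstar : ∀ i, i ≠ sstar → V i < V sstar)
    (B : ι → ℝ) (hB : ∀ i, B i = sSup (U '' {j | j ≠ i}) - L i)
    (b c : ι) (hb : ∀ i, B b ≤ B i)
    (hcb : c ≠ b) (hc : ∀ j, j ≠ b → U j ≤ U c)
    (hstop : ε < U c - L b)
    (R : ι) (hR : R = b ∨ R = c)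
    (hwide : U b - L b ≤ U R - L R ∧ U c - L c ≤ U R - L R)
    (hRstar : R ≠ sstar) :
    V sstar - V R ≤ 2 * (U R - L R) := by
  have hsup1 : sSup (U '' {j | j ≠ b}) = U c := by
    apply le_antisymm
    · refine csSup_le ⟨U c, ⟨c, hcb, rfl⟩⟩ ?_
      rintro x ⟨j, hj, rfl⟩
      exact hc j hj
    · exact le_csSup ((Set.toFinite _).image U).bddAbove ⟨c, hcb, rfl⟩
  have hsup2 : sSup (U '' {j | j ≠ c}) ≤ max (U b) (U c) := by
    refine csSup_le ⟨U b, ⟨b, fun h => hcb h.symm, rfl⟩⟩ ?_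
    rintro x ⟨j, hj, rfl⟩
    by_cases hjb : j = b
    · exact hjb ▸ le_max_left _ _
    · exact (hc j hjb).trans (le_max_right _ _)
  have hBc := hb c
  rw [hB b, hB c, hsup1] at hBc
  rcases hR with rfl | rfl
  · -- R = b (b is eliminated, use R)
    have hsb : sstar ≠ R := fun h => hRstar h.symm
    have hUcb : U c ≤ U R := by
      by_contra hlt
      push_neg at hlt
      rw [max_eq_right hlt.le] at hsup2
      linarith [hwide.2]
    have h1 := (hvalid sstar).2
    have h2 := hc sstar hsb
    have h3 := (hvalid R).1
    linarith
  · -- R = c (c is eliminated, use R)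
    have h3 := (hvalid R).1
    have h4 := (hvalid R).2
    by_cases hsb : sstar = b
    · subst hsb
      have h1 := (hvalid sstar).2
      linarith [hwide.1]
    · have h1 := (hvalid sstar).2
      have h2 := hc sstar hsb
      linarith
end
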